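/- Let X_j (j ∈ ℕ) be a sequence of Banach spaces and let f_j : [a,b] → X_j be Bochner integrable functions. Then there exists a single sequence of subdivisions (t_k^i)_{0 ≤ i ≤ i_k} of [a,b], independent of j, with mesh tending to 0, such that for every j, ∑_{i=1}^{i_k} ∫_{t_k^{i-1}}^{t_k^i} ‖f_j(t_k^i) - f_j(t)‖_{X_j} dt → 0 as k → ∞. -/

import Mathlib

open MeasureTheory Set Filter Topology

/-!
For finitely many functions at once, pass to `s ↦ (f 0 s, …, f k s)`, with values in the finite
product of the `X j` (sup norm): its Riemann error dominates that of every component, and a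
diagonal choice over `k` then serves all `j`.

For a single integrable `f`, approximate it in `L¹(a, b)` by a continuous compactly supported `g`.
On a cell `(tᵢ, tᵢ₊₁]`, `‖f tᵢ₊₁ - f s‖ ≤ ‖(f - g) tᵢ₊₁‖ + ω_g(mesh) + ‖(f - g) s‖`, and only the
tag term `∑ (tᵢ₊₁ - tᵢ) ‖(f - g) tᵢ₊₁‖` needs a good subdivision: move each interior point of a
uniform grid by less than half a step, to a point where `‖f - g‖` is at most its average there.
The tag term is then at most `4 ‖f - g‖_{L¹} + 2 · step · ‖(f - g) b‖`.
-/

structure IsSubdivision (a b δ : ℝ) (n : ℕ) (t : ℕ → ℝ) : Prop where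
  one_le : 1 ≤ n
  zero_eq : t 0 = a
  last_eq : t n = b
  lt_succ : ∀ i < n, t i < t (i + 1)
  mesh_lt : ∀ i < n, t (i + 1) - t i < δ

section RiemannError

variable {E : Type*} [NormedAddCommGroup E]

noncomputable def riemannError (f : ℝ → E) (n : ℕ) (t : ℕ → ℝ) : ℝ :=
  ∑ i ∈ Finset.range n, ∫ s in Ioc (t i) (t (i + 1)), ‖f (t (i + 1)) - f s‖

lemma riemannError_nonneg (f : ℝ → E) (n : ℕ) (t : ℕ → ℝ) : 0 ≤ riemannError f n t :=
  Finset.sum_nonneg fun _ _ => setIntegral_nonneg measurableSet_Ioc fun _ _ => norm_nonneg _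

end RiemannError

namespace IsSubdivision

variable {a b δ : ℝ} {n : ℕ} {t : ℕ → ℝ}

lemma mono (ht : IsSubdivision a b δ n t) {δ' : ℝ} (hδ : δ ≤ δ') : IsSubdivision a b δ' n t :=
  { ht with mesh_lt := fun i hi => (ht.mesh_lt i hi).trans_le hδ }

lemma strictMonoOn (ht : IsSubdivision a b δ n t) : StrictMonoOn t (Iic n) :=
  strictMonoOn_Iic_of_lt_succ ht.lt_succ

lemma Ioc_subset (ht : IsSubdivision a b δ n t) {i : ℕ} (hi : i < n) :
    Ioc (t i) (t (i + 1)) ⊆ Ioc a b := by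
  rw [← ht.zero_eq, ← ht.last_eq]
  exact Ioc_subset_Ioc
    (ht.strictMonoOn.monotoneOn (by simp) (by simp; omega) (Nat.zero_le i))
    (ht.strictMonoOn.monotoneOn (by simp; omega) (by simp) hi)

lemma sum_setIntegral_Ioc {F : Type*} [NormedAddCommGroup F] [NormedSpace ℝ F]
    (ht : IsSubdivision a b δ n t) {φ : ℝ → F} (hφ : IntegrableOn φ (Ioc a b)) :
    ∑ i ∈ Finset.range n, ∫ x in Ioc (t i) (t (i + 1)), φ x = ∫ x in Ioc a b, φ x := by
  have hab : a ≤ b := by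
    rw [← ht.zero_eq, ← ht.last_eq]
    exact ht.strictMonoOn.monotoneOn (by simp) (by simp) (Nat.zero_le n)
  calc ∑ i ∈ Finset.range n, ∫ x in Ioc (t i) (t (i + 1)), φ x
      = ∑ i ∈ Finset.range n, ∫ x in t i..t (i + 1), φ x :=
        Finset.sum_congr rfl fun i hi =>
          (intervalIntegral.integral_of_le (ht.lt_succ i (Finset.mem_range.1 hi)).le).symm
    _ = ∫ x in t 0..t n, φ x :=
        intervalIntegral.sum_integral_adjacent_intervals fun i hi =>
          (intervalIntegrable_iff_integrableOn_Ioc_of_le (ht.lt_succ i hi).le).2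
            (hφ.mono_set (ht.Ioc_subset hi))
    _ = ∫ x in Ioc a b, φ x := by rw [ht.zero_eq, ht.last_eq, intervalIntegral.integral_of_le hab]

end IsSubdivision

section

variable {E : Type*} [NormedAddCommGroup E]

lemma riemannError_le_of_approx [NormedSpace ℝ E] {f g : ℝ → E} {a b μ ω : ℝ} {n : ℕ}
    {t : ℕ → ℝ} (ht : IsSubdivision a b μ n t) (hf : IntegrableOn f (Ioc a b))
    (hg : IntegrableOn g (Ioc a b)) (hgω : ∀ x y, dist x y < μ → ‖g x - g y‖ ≤ ω) :
    riemannError f n t ≤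
      (∑ i ∈ Finset.range n, (t (i + 1) - t i) * ‖f (t (i + 1)) - g (t (i + 1))‖)
        + (b - a) * ω + ∫ x in Ioc a b, ‖f x - g x‖ := by
  have hφ : IntegrableOn (fun x => ‖f x - g x‖) (Ioc a b) := (hf.sub hg).norm
  have hcell : ∀ i < n, ∫ s in Ioc (t i) (t (i + 1)), ‖f (t (i + 1)) - f s‖
      ≤ (t (i + 1) - t i) * (‖f (t (i + 1)) - g (t (i + 1))‖ + ω)
        + ∫ s in Ioc (t i) (t (i + 1)), ‖f s - g s‖ := by
    intro i hi
    set c := t (i + 1)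
    have hsub := ht.Ioc_subset hi
    have hpt : ∀ s ∈ Ioc (t i) c, ‖f c - f s‖ ≤ (‖f c - g c‖ + ω) + ‖f s - g s‖ := by
      intro s hs
      have hcs : dist c s < μ := by
        rw [Real.dist_eq, abs_of_nonneg (sub_nonneg.2 hs.2)]
        linarith [ht.mesh_lt i hi, hs.1]
      calc ‖f c - f s‖ = ‖(f c - g c) + (g c - g s) - (f s - g s)‖ := by congr 1; abel
        _ ≤ ‖f c - g c‖ + ‖g c - g s‖ + ‖f s - g s‖ :=
          norm_sub_le_of_le (norm_add_le _ _) le_rfl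
        _ ≤ (‖f c - g c‖ + ω) + ‖f s - g s‖ := by linarith [hgω c s hcs]
    have hint : IntegrableOn (fun _ => ‖f c - g c‖ + ω) (Ioc (t i) c) :=
      integrableOn_const measure_Ioc_lt_top.ne
    calc ∫ s in Ioc (t i) c, ‖f c - f s‖
        ≤ ∫ s in Ioc (t i) c, ((‖f c - g c‖ + ω) + ‖f s - g s‖) :=
          setIntegral_mono_on
            ((integrableOn_const measure_Ioc_lt_top.ne).sub (hf.mono_set hsub)).norm
            (hint.add (hφ.mono_set hsub)) measurableSet_Ioc hpt
      _ = (c - t i) * (‖f c - g c‖ + ω) + ∫ s in Ioc (t i) c, ‖f s - g s‖ := by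
          rw [integral_add hint (hφ.mono_set hsub), setIntegral_const,
            Real.volume_real_Ioc_of_le (ht.lt_succ i hi).le, smul_eq_mul]
  calc riemannError f n t
      ≤ ∑ i ∈ Finset.range n, ((t (i + 1) - t i) * (‖f (t (i + 1)) - g (t (i + 1))‖ + ω)
        + ∫ s in Ioc (t i) (t (i + 1)), ‖f s - g s‖) :=
        Finset.sum_le_sum fun i hi => hcell i (Finset.mem_range.1 hi)
    _ = _ := by
        simp only [mul_add, Finset.sum_add_distrib, ht.sum_setIntegral_Ioc hφ]
        rw [← Finset.sum_mul, Finset.sum_range_sub t, ht.zero_eq, ht.last_eq]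

end

lemma exists_mem_Ioc_mul_le_setIntegral {φ : ℝ → ℝ} {u v : ℝ} (huv : u < v)
    (hφ : IntegrableOn φ (Ioc u v)) : ∃ x ∈ Ioc u v, φ x * (v - u) ≤ ∫ s in Ioc u v, φ s := by
  obtain ⟨x, hx, hle⟩ := exists_le_setAverage (by simp [huv]) (by simp) hφ
  refine ⟨x, hx, ?_⟩
  rwa [setAverage_eq, Real.volume_real_Ioc_of_le huv.le, smul_eq_mul, ← div_eq_inv_mul,
    le_div_iff₀ (sub_pos.2 huv)] at hle

section UniformGrid

variable {a b : ℝ} {n : ℕ}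

noncomputable def uniformGrid (a b : ℝ) (n i : ℕ) : ℝ := a + i * ((b - a) / n)

lemma uniformGrid_zero : uniformGrid a b n 0 = a := by simp [uniformGrid]

lemma uniformGrid_self (hn : n ≠ 0) : uniformGrid a b n n = b := by
  simp only [uniformGrid]
  field_simp
  ring

lemma uniformGrid_succ (i : ℕ) :
    uniformGrid a b n (i + 1) = uniformGrid a b n i + (b - a) / n := by
  simp only [uniformGrid]
  push_cast
  ring

lemma isSubdivision_uniformGrid (hab : a < b) (hn : 1 ≤ n) :
    IsSubdivision a b (2 * ((b - a) / n)) n (uniformGrid a b n) := by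
  have hδ : 0 < (b - a) / n := div_pos (sub_pos.2 hab) (by exact_mod_cast hn)
  exact ⟨hn, uniformGrid_zero, uniformGrid_self (by omega),
    fun i _ => by linarith [uniformGrid_succ (a := a) (b := b) (n := n) i],
    fun i _ => by linarith [uniformGrid_succ (a := a) (b := b) (n := n) i]⟩

lemma isSubdivision_of_mem_Ioc_uniformGrid (hab : a < b) (hn : 1 ≤ n) {t : ℕ → ℝ}
    (h0 : t 0 = a) (hlast : t n = b)
    (hnear : ∀ i ≤ n, t i ∈ Ioc (uniformGrid a b n i - (b - a) / n / 2) (uniformGrid a b n i)) :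
    IsSubdivision a b (2 * ((b - a) / n)) n t := by
  have hδ : 0 < (b - a) / n := div_pos (sub_pos.2 hab) (by exact_mod_cast hn)
  refine ⟨hn, h0, hlast, fun i hi => ?_, fun i hi => ?_⟩
  all_goals
    have := hnear i hi.le
    have := hnear (i + 1) hi
    have := uniformGrid_succ (a := a) (b := b) (n := n) i
    simp only [mem_Ioc] at *
    linarith

lemma exists_near_uniformGrid_mul_le {φ : ℝ → ℝ} (hab : a < b) (hφ : IntegrableOn φ (Ioc a b))
    (hφ0 : ∀ x, 0 ≤ φ x) (hn : 1 ≤ n) :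
    ∃ t : ℕ → ℝ, IsSubdivision a b (2 * ((b - a) / n)) n t ∧
      ∀ i, i + 1 < n → φ (t (i + 1)) * ((b - a) / n)
        ≤ 2 * ∫ x in Ioc (uniformGrid a b n i) (uniformGrid a b n (i + 1)), φ x := by
  set δ := (b - a) / n
  set p := uniformGrid a b n
  have hδ : 0 < δ := div_pos (sub_pos.2 hab) (by exact_mod_cast hn)
  have hgrid := isSubdivision_uniformGrid hab hn
  have hhalf : ∀ i, Ioc (p (i + 1) - δ / 2) (p (i + 1)) ⊆ Ioc (p i) (p (i + 1)) := fun i =>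
    Ioc_subset_Ioc_left (by linarith [uniformGrid_succ (a := a) (b := b) (n := n) i])
  have htag : ∀ i, i + 1 < n → ∃ x ∈ Ioc (p (i + 1) - δ / 2) (p (i + 1)),
      φ x * (δ / 2) ≤ ∫ s in Ioc (p (i + 1) - δ / 2) (p (i + 1)), φ s := fun i hi => by
    simpa using exists_mem_Ioc_mul_le_setIntegral (by linarith)
      (hφ.mono_set ((hhalf i).trans (hgrid.Ioc_subset (by omega))))
  choose! τ hτ_mem hτ_le using htag
  set t : ℕ → ℝ := fun i => if i = 0 then a else if i < n then τ (i - 1) else b with ht_def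
  have hnear : ∀ i ≤ n, t i ∈ Ioc (p i - δ / 2) (p i) := by
    intro i hi
    rcases i with _ | i
    · simp [ht_def, p, uniformGrid_zero, hδ]
    rcases hi.lt_or_eq with hin | rfl
    · simpa [ht_def, hin] using hτ_mem i hin
    · simp [ht_def, p, uniformGrid_self, hδ]
  refine ⟨t, isSubdivision_of_mem_Ioc_uniformGrid hab hn (by simp [ht_def])
    (by simp [ht_def]; omega) hnear, fun i hi => ?_⟩
  have hti : t (i + 1) = τ i := by simp [ht_def, hi]
  calc φ (t (i + 1)) * δ = 2 * (φ (τ i) * (δ / 2)) := by rw [hti]; ring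
    _ ≤ 2 * ∫ s in Ioc (p (i + 1) - δ / 2) (p (i + 1)), φ s := by gcongr; exact hτ_le i hi
    _ ≤ 2 * ∫ x in Ioc (p i) (p (i + 1)), φ x :=
        mul_le_mul_of_nonneg_left (setIntegral_mono_set
          (hφ.mono_set (hgrid.Ioc_subset (by omega))) (Eventually.of_forall hφ0)
          (hhalf i).eventuallyLE) zero_le_two

end UniformGrid

lemma exists_subdivision_sum_mul_le {φ : ℝ → ℝ} {a b : ℝ} (hab : a < b)
    (hφ : IntegrableOn φ (Ioc a b)) (hφ0 : ∀ x, 0 ≤ φ x) {n : ℕ} (hn : 1 ≤ n) :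
    ∃ t, IsSubdivision a b (2 * ((b - a) / n)) n t ∧
      ∑ i ∈ Finset.range n, (t (i + 1) - t i) * φ (t (i + 1))
        ≤ 4 * (∫ x in Ioc a b, φ x) + 2 * ((b - a) / n) * φ b := by
  obtain ⟨t, ht, htag⟩ := exists_near_uniformGrid_mul_le hab hφ hφ0 hn
  refine ⟨t, ht, ?_⟩
  set δ := (b - a) / n
  set p := uniformGrid a b n
  have hcell : ∀ i, 0 ≤ 4 * ∫ x in Ioc (p i) (p (i + 1)), φ x := fun i =>
    mul_nonneg zero_le_four (setIntegral_nonneg measurableSet_Ioc fun x _ => hφ0 x)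
  have hmesh : ∀ i < n, (t (i + 1) - t i) * φ (t (i + 1)) ≤ 2 * δ * φ (t (i + 1)) :=
    fun i hi => mul_le_mul_of_nonneg_right (ht.mesh_lt i hi).le (hφ0 _)
  obtain ⟨m, rfl⟩ : ∃ m, n = m + 1 := ⟨n - 1, by omega⟩
  have hinner : ∀ i < m, (t (i + 1) - t i) * φ (t (i + 1))
      ≤ 4 * ∫ x in Ioc (p i) (p (i + 1)), φ x := fun i hi => by
    linarith [hmesh i (by omega), htag i (by omega)]
  calc ∑ i ∈ Finset.range (m + 1), (t (i + 1) - t i) * φ (t (i + 1))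
      ≤ (∑ i ∈ Finset.range m, 4 * ∫ x in Ioc (p i) (p (i + 1)), φ x) + 2 * δ * φ b := by
        rw [Finset.sum_range_succ, ← ht.last_eq]
        exact add_le_add (Finset.sum_le_sum fun i hi => hinner i (Finset.mem_range.1 hi))
          (hmesh m m.lt_succ_self)
    _ ≤ (∑ i ∈ Finset.range (m + 1), 4 * ∫ x in Ioc (p i) (p (i + 1)), φ x) + 2 * δ * φ b :=
        add_le_add_left (Finset.sum_le_sum_of_subset_of_nonneg
          (Finset.range_subset_range.2 m.le_succ) fun i _ _ => hcell i) _
    _ = 4 * (∫ x in Ioc a b, φ x) + 2 * δ * φ b := by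
        rw [← Finset.mul_sum, (isSubdivision_uniformGrid hab hn).sum_setIntegral_Ioc hφ]

lemma exists_subdivision_riemannError_le {E : Type*} [NormedAddCommGroup E] [NormedSpace ℝ E]
    {f : ℝ → E} {a b : ℝ} (hab : a < b) (hf : IntegrableOn f (Ioc a b)) {ε δ : ℝ}
    (hε : 0 < ε) (hδ : 0 < δ) : ∃ n t, IsSubdivision a b δ n t ∧ riemannError f n t ≤ ε := by
  set η := ε / 7 with hη
  have hηpos : 0 < η := by positivity
  obtain ⟨g, hg_supp, hg_approx, hg_cont, hg_int⟩ :=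
    (hf.integrable_indicator measurableSet_Ioc).exists_hasCompactSupport_integral_sub_le hηpos
  set φ : ℝ → ℝ := fun x => ‖f x - g x‖ with hφ_def
  have hφ : IntegrableOn φ (Ioc a b) := (hf.sub hg_int.integrableOn).norm
  have hφη : ∫ x in Ioc a b, φ x ≤ η :=
    calc ∫ x in Ioc a b, φ x = ∫ x in Ioc a b, ‖(Ioc a b).indicator f x - g x‖ :=
          setIntegral_congr_fun measurableSet_Ioc fun x hx => by simp [φ, indicator_of_mem hx]
      _ ≤ ∫ x, ‖(Ioc a b).indicator f x - g x‖ :=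
          setIntegral_le_integral ((hf.integrable_indicator measurableSet_Ioc).sub hg_int).norm
            (Eventually.of_forall fun _ => norm_nonneg _)
      _ ≤ η := hg_approx
  obtain ⟨μ, hμ, hgμ⟩ := Metric.uniformContinuous_iff.1
    (hg_supp.uniformContinuous_of_continuous hg_cont) (η / (b - a))
    (div_pos hηpos (sub_pos.2 hab))
  have hstep : Tendsto (fun n : ℕ => 2 * ((b - a) / n)) atTop (𝓝 0) := by
    simpa using (tendsto_const_div_atTop_nhds_zero_nat (b - a)).const_mul 2
  have hstep_b : Tendsto (fun n : ℕ => 2 * ((b - a) / n) * φ b) atTop (𝓝 0) := by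
    simpa using hstep.mul_const (φ b)
  obtain ⟨n, hn, hnδ, hnμ, hnb⟩ := ((eventually_ge_atTop 1).and <|
    (hstep.eventually_lt_const hδ).and <| (hstep.eventually_lt_const hμ).and <|
      hstep_b.eventually_lt_const hηpos).exists
  obtain ⟨t, ht, htag⟩ := exists_subdivision_sum_mul_le hab hφ (fun _ => norm_nonneg _) hn
  refine ⟨n, t, ht.mono hnδ.le, ?_⟩
  calc riemannError f n t
      ≤ (4 * (∫ x in Ioc a b, φ x) + 2 * ((b - a) / n) * φ b) + (b - a) * (η / (b - a))
        + ∫ x in Ioc a b, φ x := by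
        refine (riemannError_le_of_approx (ht.mono hnμ.le) hf hg_int.integrableOn
          fun x y hxy => ?_).trans (by gcongr)
        simpa [dist_eq_norm] using (hgμ hxy).le
    _ ≤ (4 * η + η) + η + η := by
        rw [mul_div_cancel₀ _ (sub_pos.2 hab).ne']
        linarith
    _ = ε := by ring

lemma riemannError_eval_le {ι : Type*} [Fintype ι] {Y : ι → Type*}
    [∀ i, NormedAddCommGroup (Y i)] {F : ℝ → Π i, Y i} {a b δ : ℝ} {n : ℕ} {t : ℕ → ℝ}
    (ht : IsSubdivision a b δ n t) (hF : IntegrableOn F (Ioc a b)) (j : ι) :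
    riemannError (fun s => F s j) n t ≤ riemannError F n t :=
  Finset.sum_le_sum fun i hi => integral_mono_of_nonneg
    (Eventually.of_forall fun _ => norm_nonneg _)
    ((integrableOn_const measure_Ioc_lt_top.ne).sub
      (hF.mono_set (ht.Ioc_subset (Finset.mem_range.1 hi)))).norm
    (Eventually.of_forall fun s => norm_le_pi_norm (F _ - F s) j)

theorem stmt2_general {X : ℕ → Type*} [∀ j, NormedAddCommGroup (X j)] [∀ j, NormedSpace ℝ (X j)]
    (a b : ℝ) (hab : a < b) (f : ∀ j, ℝ → X j)
    (hf : ∀ j, IntegrableOn (f j) (Set.Icc a b) volume) :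
    ∃ (ik : ℕ → ℕ) (t : ℕ → ℕ → ℝ),
      (∀ k, 1 ≤ ik k) ∧
      (∀ k, t k 0 = a) ∧ (∀ k, t k (ik k) = b) ∧
      (∀ k, ∀ i < ik k, t k i < t k (i + 1)) ∧
      (∀ ε > (0:ℝ), ∃ K : ℕ, ∀ k ≥ K, ∀ i < ik k, t k (i + 1) - t k i < ε) ∧
      ∀ j, Tendsto
        (fun k => ∑ i ∈ Finset.range (ik k),
          ∫ s in Set.Ioc (t k i) (t k (i + 1)), ‖f j (t k (i + 1)) - f j s‖)
        atTop (𝓝 0) := by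
  have hF : ∀ k : ℕ, IntegrableOn (fun s (j : Fin (k + 1)) => f j s) (Ioc a b) :=
    fun k => integrable_pi_iff.2 fun j => (hf j).mono_set Ioc_subset_Icc_self
  choose n t ht herr using fun k : ℕ =>
    exists_subdivision_riemannError_le hab (hF k) Nat.one_div_pos_of_nat Nat.one_div_pos_of_nat
  refine ⟨n, t, fun k => (ht k).one_le, fun k => (ht k).zero_eq, fun k => (ht k).last_eq,
    fun k => (ht k).lt_succ, fun ε hε => ?_, fun j => ?_⟩
  · obtain ⟨K, hK⟩ := exists_nat_one_div_lt hε
    exact ⟨K, fun k hk i hi =>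
      ((ht k).mesh_lt i hi).trans ((Nat.one_div_le_one_div hk).trans_lt hK)⟩
  · refine squeeze_zero' (Eventually.of_forall fun k => riemannError_nonneg _ _ _) ?_
      tendsto_one_div_add_atTop_nhds_zero_nat
    filter_upwards [eventually_ge_atTop j] with k hk
    exact (riemannError_eval_le (ht k) (hF k) ⟨j, Nat.lt_succ_of_le hk⟩).trans (herr k)

/-- **Simultaneous Riemann-sum approximation for countably many Banach-valued functions.**
Given Banach spaces `X j` and Bochner integrable `f j : [a,b] → X j`, there is a single
sequence of subdivisions of `[a,b]`, independent of `j`, with mesh tending to `0`, such that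
for every `j`, `∑_i ∫_{t_k^{i-1}}^{t_k^i} ‖f_j(t_k^i) - f_j(t)‖ dt → 0`. -/
theorem stmt2 {X : ℕ → Type*} [∀ j, NormedAddCommGroup (X j)] [∀ j, NormedSpace ℝ (X j)]
    [∀ j, CompleteSpace (X j)]
    (a b : ℝ) (hab : a < b) (f : ∀ j, ℝ → X j)
    (hf : ∀ j, IntegrableOn (f j) (Set.Icc a b) volume) :
    ∃ (ik : ℕ → ℕ) (t : ℕ → ℕ → ℝ),
      (∀ k, 1 ≤ ik k) ∧
      (∀ k, t k 0 = a) ∧ (∀ k, t k (ik k) = b) ∧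
      (∀ k, ∀ i < ik k, t k i < t k (i + 1)) ∧
      (∀ ε > (0:ℝ), ∃ K : ℕ, ∀ k ≥ K, ∀ i < ik k, t k (i + 1) - t k i < ε) ∧
      ∀ j, Tendsto
        (fun k => ∑ i ∈ Finset.range (ik k),
          ∫ s in Set.Ioc (t k i) (t k (i + 1)), ‖f j (t k (i + 1)) - f j s‖)
        atTop (𝓝 0) :=
  stmt2_general a b hab f hf
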